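/- If G is a (P₃ ∪ P₂, diamond)-free graph with clique number ω ≥ 5, then G is perfect; in particular χ(G) = ω(G). -/

import Mathlib

open SimpleGraph

/-- `H` occurs as an induced subgraph of `G`. -/
def IsInducedCopy {α β : Type*} (H : SimpleGraph α) (G : SimpleGraph β) : Prop :=
  ∃ f : α ↪ β, ∀ a b : α, G.Adj (f a) (f b) ↔ H.Adj a b

/-- `G` is `H`-free: no induced copy of `H`. -/
def Free {α β : Type*} (G : SimpleGraph α) (H : SimpleGraph β) : Prop :=
  ¬ IsInducedCopy H G

/-- `P₃ ∪ P₂`: disjoint union of a path on 3 vertices and an edge. -/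
def P3UP2 : SimpleGraph (Fin 5) :=
  SimpleGraph.fromRel (fun a b => (a, b) ∈ [((0 : Fin 5), (1 : Fin 5)), (1, 2), (3, 4)])

/-- The diamond: `K₄` minus an edge. -/
def diamondG : SimpleGraph (Fin 4) :=
  SimpleGraph.fromRel (fun a b =>
    (a, b) ∈ [((0 : Fin 4), (2 : Fin 4)), (0, 3), (1, 2), (1, 3), (2, 3)])

/-- `2K₂`: two disjoint edges. -/
def twoK2 : SimpleGraph (Fin 4) :=
  SimpleGraph.fromRel (fun a b => (a, b) ∈ [((0 : Fin 4), (1 : Fin 4)), (2, 3)])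

/-- `P₄ ∪ P₂`. -/
def P4UP2 : SimpleGraph (Fin 6) :=
  SimpleGraph.fromRel (fun a b =>
    (a, b) ∈ [((0 : Fin 6), (1 : Fin 6)), (1, 2), (2, 3), (4, 5)])

/-- The cycle on `n` vertices (for `n ≥ 3`), as a graph on `ZMod n`. -/
def cycG (n : ℕ) : SimpleGraph (ZMod n) :=
  SimpleGraph.fromRel (fun a b => b = a + 1)

/-- A graph is perfect if every induced subgraph has chromatic number
equal to its clique number. -/
def IsPerfect {V : Type*} (G : SimpleGraph V) : Prop :=
  ∀ s : Set V, (G.induce s).chromaticNumber = ((G.induce s).cliqueNum : ℕ∞)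

/-- The set `C_{ij}` attached to a maximum clique enumerated by `f : Fin ω ↪ V`:
vertices outside the clique, non-adjacent to both `f i` and `f j`, where `(i,j)`
is the lexicographically least such pair (this closed form is equivalent to the
iterative definition removing earlier `C`-sets). -/
def Cset {V : Type*} (G : SimpleGraph V) {ω : ℕ} (f : Fin ω ↪ V) (i j : Fin ω) : Set V :=
  {v | v ∉ Set.range f ∧ ¬ G.Adj v (f i) ∧ ¬ G.Adj v (f j) ∧
    ∀ p q : Fin ω, p < q → ¬ G.Adj v (f p) → ¬ G.Adj v (f q) →
      i < p ∨ (i = p ∧ j ≤ q)}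

/-- The set `I_a` attached to a maximum clique enumerated by `f : Fin ω ↪ V`:
vertices outside the clique adjacent to every clique vertex except `f k`. -/
def Iset {V : Type*} (G : SimpleGraph V) {ω : ℕ} (f : Fin ω ↪ V) (k : Fin ω) : Set V :=
  {v | v ∉ Set.range f ∧ ¬ G.Adj v (f k) ∧ ∀ l : Fin ω, l ≠ k → G.Adj v (f l)}

/-!
Let `K` be a maximum clique, of size `ω ≥ 5`. A vertex `v ∉ K` with two neighbours `a, b ∈ K`
misses some `c ∈ K` by maximality, and then `v, c, a, b` span a diamond; so every vertex outside
`K` has at most one neighbour in `K`. Three vertices outside `K` therefore miss at least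
`ω - 3 ≥ 2` common vertices of `K`, which form the `P₂` of a `P₃ ∪ P₂` with any induced `P₃`
among them: `G - K` is a disjoint union of cliques. Both properties pass to every induced
subgraph, with `K ∩ S` in place of `K`.

Such a graph is `ω`-colourable: colour `K` injectively, then colour each clique `C` of `G - K`
injectively, each vertex avoiding the colour of its (at most one) neighbour in `K`. By Hall's
theorem this fails only if `|C| = ω` and all of `C` forbids the same colour, i.e. has the same
neighbour in `K`, which would give a clique of size `ω + 1`.
-/

open Finset

theorem exists_injOn_lt_avoiding {ι : Type*} {s : Finset ι} {m : ℕ}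
    {forbid : ι → ℕ → Prop} (hforbid : ∀ i ∈ s, ∀ x y, forbid i x → forbid i y → x = y)
    (hs : #s ≤ m)
    (hspread : #s = m → ∀ x < m, ∃ i ∈ s, ¬ forbid i x) :
    ∃ g : ι → ℕ, Set.InjOn g s ∧ ∀ i ∈ s, g i < m ∧ ¬ forbid i (g i) := by
  classical
  have hall (A : Finset s) : #A ≤ #{x : Fin m | ∃ a ∈ A, ¬ forbid a x} := by
    rcases A.eq_empty_or_nonempty with rfl | ⟨i₀, hi₀⟩
    · simp
    have hgood : m - 1 ≤ #{x : Fin m | ∃ a ∈ A, ¬ forbid a x} := by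
      have hle : #{x : Fin m | forbid i₀ x} ≤ 1 := card_le_one.2 fun x hx y hy =>
        Fin.ext (hforbid _ i₀.2 _ _ (mem_filter.1 hx).2 (mem_filter.1 hy).2)
      have hsplit := card_filter_add_card_filter_not (s := univ) fun x : Fin m => forbid i₀ x
      have : #{x : Fin m | ¬ forbid i₀ x} ≤ #{x : Fin m | ∃ a ∈ A, ¬ forbid a x} :=
        card_le_card fun x hx => mem_filter.2 ⟨mem_univ x, i₀, hi₀, (mem_filter.1 hx).2⟩
      simp only [card_univ, Fintype.card_fin] at hsplit
      omega
    have hAs : #A ≤ #s := by simpa using card_le_univ A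
    rcases (by omega : #A < m ∨ #A = m) with hlt | heq
    · omega
    have hAuniv : A = univ := eq_univ_of_card A (by simp; omega)
    have hfull : ∀ x : Fin m, ∃ a ∈ A, ¬ forbid a x := fun x => by
      obtain ⟨i, hi, hix⟩ := hspread (by omega) x x.2
      exact ⟨⟨i, hi⟩, hAuniv ▸ mem_univ _, hix⟩
    simp [hfull, heq]
  obtain ⟨f, hf, hf_avoid⟩ := (Fintype.all_card_le_filter_rel_iff_exists_injective _).1 hall
  refine ⟨fun i => if hi : i ∈ s then f ⟨i, hi⟩ else 0, fun i hi j hj hij => ?_, fun i hi => ?_⟩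
  · simp only [Finset.mem_coe] at hi hj
    simp only [dif_pos hi, dif_pos hj, Fin.val_inj] at hij
    exact congrArg Subtype.val (hf hij)
  · simp only [dif_pos hi]
    exact ⟨(f _).2, hf_avoid ⟨i, hi⟩⟩

theorem isInducedCopy_of_injective {α β : Type*} {H : SimpleGraph α} {G : SimpleGraph β}
    {f : α → β} (hf : f.Injective) (hadj : ∀ a b, G.Adj (f a) (f b) ↔ H.Adj a b) :
    IsInducedCopy H G :=
  ⟨⟨f, hf⟩, hadj⟩

section Forbidden

variable {V : Type*} {G : SimpleGraph V}

theorem Free.adj_of_diamondG (h : _root_.Free G diamondG) {a b c d : V} (hab : a ≠ b)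
    (hac : G.Adj a c) (had : G.Adj a d) (hbc : G.Adj b c) (hbd : G.Adj b d) (hcd : G.Adj c d) :
    G.Adj a b := by
  by_contra hnab
  refine h (isInducedCopy_of_injective (f := ![a, b, c, d]) (fun i j hij => ?_) fun i j => ?_) <;>
    fin_cases i <;> fin_cases j <;>
    simp_all [diamondG, G.adj_comm, G.ne_of_adj]

theorem Free.adj_of_P3UP2 (h : _root_.Free G P3UP2) {u w z x y : V} (huz : u ≠ z)
    (huw : G.Adj u w) (hwz : G.Adj w z) (hxy : G.Adj x y)
    (hux : ¬ G.Adj u x) (huy : ¬ G.Adj u y) (hwx : ¬ G.Adj w x) (hwy : ¬ G.Adj w y)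
    (hzx : ¬ G.Adj z x) (hzy : ¬ G.Adj z y) : G.Adj u z := by
  by_contra hnuz
  refine h (isInducedCopy_of_injective (f := ![u, w, z, x, y]) (fun i j hij => ?_)
    fun i j => ?_) <;> fin_cases i <;> fin_cases j <;>
    simp_all [P3UP2, G.adj_comm, G.ne_of_adj]

theorem Free.eq_of_adj_of_adj_of_maximal_isClique (h : _root_.Free G diamondG) {K : Set V}
    (hK : Maximal G.IsClique K) {v a b : V} (hv : v ∉ K) (ha : a ∈ K) (hb : b ∈ K)
    (hva : G.Adj v a) (hvb : G.Adj v b) : a = b := by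
  by_contra hab
  obtain ⟨c, hc, hvc⟩ : ∃ c ∈ K, ¬ G.Adj v c := by
    by_contra! hall
    exact hv (hK.mem_of_prop_insert (hK.prop.insert fun c hc _ => hall c hc))
  have hca : G.Adj c a := hK.prop hc ha fun hca => hvc (hca ▸ hva)
  have hcb : G.Adj c b := hK.prop hc hb fun hcb => hvc (hcb ▸ hvb)
  exact hvc (h.adj_of_diamondG (ne_of_mem_of_not_mem hc hv).symm hva hvb hca hcb
    (hK.prop ha hb hab))

theorem Free.adj_of_adj_of_adj_of_isClique (h : _root_.Free G P3UP2) {K : Finset V}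
    (hK : G.IsClique (K : Set V)) (hcard : 5 ≤ #K)
    (hnbr : ∀ v ∉ K, ∀ a ∈ K, ∀ b ∈ K, G.Adj v a → G.Adj v b → a = b)
    {u w z : V} (hu : u ∉ K) (hw : w ∉ K) (hz : z ∉ K) (huz : u ≠ z)
    (huw : G.Adj u w) (hwz : G.Adj w z) : G.Adj u z := by
  classical
  set N : V → Finset V := fun v => {a ∈ K | G.Adj v a}
  have hN : ∀ v ∉ K, #(N v) ≤ 1 := fun v hv => card_le_one.2 fun a ha b hb =>
    hnbr v hv a (mem_filter.1 ha).1 b (mem_filter.1 hb).1 (mem_filter.1 ha).2 (mem_filter.1 hb).2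
  have hS : #(N u ∪ N w ∪ N z) ≤ 3 :=
    calc #(N u ∪ N w ∪ N z) ≤ #(N u) + #(N w) + #(N z) :=
          (card_union_le _ _).trans (add_le_add (card_union_le _ _) le_rfl)
      _ ≤ 3 := by linarith [hN u hu, hN w hw, hN z hz]
  obtain ⟨x, hx, y, hy, hxy⟩ := one_lt_card.1 (by
    have := le_card_sdiff (N u ∪ N w ∪ N z) K; omega : 1 < #(K \ (N u ∪ N w ∪ N z)))
  simp only [N, mem_sdiff, mem_union, mem_filter, not_or, not_and] at hx hy
  exact h.adj_of_P3UP2 huz huw hwz (hK hx.1 hy.1 hxy) (hx.2.1.1 hx.1) (hy.2.1.1 hy.1)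
    (hx.2.1.2 hx.1) (hy.2.1.2 hy.1) (hx.2.2 hx.1) (hy.2.2 hy.1)

end Forbidden

namespace SimpleGraph

variable {W : Type*} {H : SimpleGraph W}

theorem IsNClique.exists_not_adj_of_cliqueNum [Finite W] {C : Finset W}
    (hC : H.IsNClique H.cliqueNum C) (a : W) : ∃ c ∈ C, ¬ H.Adj a c := by
  classical
  by_contra! hall
  have := (hC.insert hall).isClique.card_le_cliqueNum
  rw [(hC.insert hall).card_eq] at this
  omega

section Cluster

variable [Fintype W] [DecidableEq W] [DecidableRel H.Adj] {A : Finset W}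

variable (H A) in
/-- When `H - A` is a disjoint union of cliques, this is the clique containing `u`. -/
def cluster (u : W) : Finset W := insert u (H.neighborFinset u) \ A

theorem mem_cluster {u w : W} : w ∈ H.cluster A u ↔ w ∉ A ∧ (w = u ∨ H.Adj u w) := by
  simp [cluster, and_comm]

theorem self_mem_cluster {u : W} (hu : u ∉ A) : u ∈ H.cluster A u :=
  mem_cluster.2 ⟨hu, .inl rfl⟩

variable (htrans : ∀ u w z, u ∉ A → w ∉ A → z ∉ A → u ≠ z → H.Adj u w → H.Adj w z → H.Adj u z)
include htrans

theorem isClique_cluster {u : W} (hu : u ∉ A) : H.IsClique (H.cluster A u : Set W) := by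
  intro w hw z hz hwz
  rw [Finset.mem_coe, mem_cluster] at hw hz
  rcases hw with ⟨hw, rfl | huw⟩ <;> rcases hz with ⟨hz, rfl | huz⟩
  · exact absurd rfl hwz
  · exact huz
  · exact huw.symm
  · exact htrans w u z hw hu hz hwz huw.symm huz

theorem cluster_subset_of_adj {u w : W} (hu : u ∉ A) (hw : w ∉ A) (huw : H.Adj u w) :
    H.cluster A u ⊆ H.cluster A w := by
  intro z hz
  rw [mem_cluster] at hz ⊢
  refine ⟨hz.1, ?_⟩
  rcases hz with ⟨hz, rfl | huz⟩
  · exact .inr huw.symm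
  · rcases eq_or_ne w z with rfl | hwz
    · exact .inl rfl
    · exact .inr (htrans w u z hw hu hz hwz huw.symm huz)

theorem cluster_eq_of_adj {u w : W} (hu : u ∉ A) (hw : w ∉ A) (huw : H.Adj u w) :
    H.cluster A u = H.cluster A w :=
  (cluster_subset_of_adj htrans hu hw huw).antisymm (cluster_subset_of_adj htrans hw hu huw.symm)

theorem exists_injOn_cluster_avoiding
    (hnbr : ∀ v ∉ A, ∀ a ∈ A, ∀ b ∈ A, H.Adj v a → H.Adj v b → a = b)
    {colA : W → ℕ} (hcolA : Set.InjOn colA A) {u : W} (hu : u ∉ A) :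
    ∃ g : W → ℕ, Set.InjOn g (H.cluster A u) ∧ ∀ w ∈ H.cluster A u,
      g w < H.cliqueNum ∧ ∀ a ∈ A, H.Adj w a → g w ≠ colA a := by
  have hC := isClique_cluster htrans hu
  -- a colour forbidden on all of a maximum clique is the colour of a common neighbour
  have hspread : #(H.cluster A u) = H.cliqueNum → ∀ x < H.cliqueNum,
      ∃ w ∈ H.cluster A u, ¬ ∃ a ∈ A, H.Adj w a ∧ colA a = x := by
    intro hcard x _
    by_contra! hall
    obtain ⟨a₀, ha₀, -, rfl⟩ := hall u (self_mem_cluster hu)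
    obtain ⟨c, hc, hnc⟩ := (⟨hC, hcard⟩ : H.IsNClique _ _).exists_not_adj_of_cliqueNum a₀
    obtain ⟨a, ha, hca, hcol⟩ := hall c hc
    exact hnc (hcolA ha ha₀ hcol ▸ hca.symm)
  obtain ⟨g, hg, hg_avoid⟩ := exists_injOn_lt_avoiding
    (forbid := fun w x => ∃ a ∈ A, H.Adj w a ∧ colA a = x)
    (fun w hw x y ⟨a, ha, hwa, hax⟩ ⟨b, hb, hwb, hby⟩ =>
      hax ▸ hby ▸ congrArg colA (hnbr w (mem_cluster.1 hw).1 a ha b hb hwa hwb))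
    hC.card_le_cliqueNum hspread
  exact ⟨g, hg, fun w hw =>
    ⟨(hg_avoid w hw).1, fun a ha hwa hga => (hg_avoid w hw).2 ⟨a, ha, hwa, hga.symm⟩⟩⟩

theorem colorable_cliqueNum_of_isClique (hA : H.IsClique (A : Set W))
    (hnbr : ∀ v ∉ A, ∀ a ∈ A, ∀ b ∈ A, H.Adj v a → H.Adj v b → a = b) :
    H.Colorable H.cliqueNum := by
  obtain ⟨colA, hcolA, hcolA_lt⟩ := exists_injOn_lt_avoiding (s := A)
    (forbid := fun _ _ => False) (by simp) hA.card_le_cliqueNum fun hcard x hx =>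
      let ⟨a, ha⟩ := Finset.card_pos.1 (hcard ▸ Nat.zero_lt_of_lt hx); ⟨a, ha, id⟩
  -- one map per cluster, not per vertex, so that adjacent vertices outside `A` share it
  have hcl (C : Finset W) : ∃ g : W → ℕ, ∀ u ∉ A, H.cluster A u = C → Set.InjOn g C ∧
      ∀ w ∈ C, g w < H.cliqueNum ∧ ∀ a ∈ A, H.Adj w a → g w ≠ colA a := by
    by_cases hC : ∃ u ∉ A, H.cluster A u = C
    · obtain ⟨u, hu, rfl⟩ := hC
      obtain ⟨g, hg⟩ := exists_injOn_cluster_avoiding htrans hnbr hcolA hu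
      exact ⟨g, fun _ _ _ => hg⟩
    · exact ⟨0, fun u hu h => absurd ⟨u, hu, h⟩ hC⟩
  choose g hg using hcl
  let c v := if v ∈ A then colA v else g (H.cluster A v) v
  rw [colorable_iff_exists_bdd_nat_coloring]
  refine ⟨Coloring.mk c fun {v w} hvw => ?_, fun v => ?_⟩
  · by_cases hv : v ∈ A <;> by_cases hw : w ∈ A <;> simp only [c, hv, hw, if_true, if_false]
    · exact fun h => hvw.ne (hcolA hv hw h)
    · exact ((hg _ w hw rfl).2 w (self_mem_cluster hw)).2 v hv hvw.symm ∘ Eq.symm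
    · exact ((hg _ v hv rfl).2 v (self_mem_cluster hv)).2 w hw hvw
    · have hcl_eq := cluster_eq_of_adj htrans hv hw hvw
      rw [hcl_eq]
      exact fun h => hvw.ne ((hg _ w hw rfl).1 (hcl_eq ▸ self_mem_cluster hv)
        (self_mem_cluster hw) h)
  · show c v < _
    by_cases hv : v ∈ A
    · simpa [c, hv] using hcolA_lt v hv
    · simpa [c, hv] using ((hg _ v hv rfl).2 v (self_mem_cluster hv)).1

end Cluster

theorem chromaticNumber_eq_cliqueNum_of_isClique [Finite W] {A : Finset W}
    (hA : H.IsClique (A : Set W))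
    (hnbr : ∀ v ∉ A, ∀ a ∈ A, ∀ b ∈ A, H.Adj v a → H.Adj v b → a = b)
    (htrans : ∀ u w z, u ∉ A → w ∉ A → z ∉ A → u ≠ z → H.Adj u w → H.Adj w z → H.Adj u z) :
    H.chromaticNumber = H.cliqueNum := by
  classical
  have := Fintype.ofFinite W
  exact le_antisymm (colorable_cliqueNum_of_isClique htrans hA hnbr).chromaticNumber_le
    H.cliqueNum_le_chromaticNumber

theorem isPerfect_of_isClique [Finite W] {A : Finset W} (hA : H.IsClique (A : Set W))
    (hnbr : ∀ v ∉ A, ∀ a ∈ A, ∀ b ∈ A, H.Adj v a → H.Adj v b → a = b)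
    (htrans : ∀ u w z, u ∉ A → w ∉ A → z ∉ A → u ≠ z → H.Adj u w → H.Adj w z → H.Adj u z) :
    IsPerfect H := by
  classical
  intro s
  have hmem {v : s} : v ∈ A.subtype (· ∈ s) ↔ (v : W) ∈ A := Finset.mem_subtype
  exact chromaticNumber_eq_cliqueNum_of_isClique
    (fun a ha b hb hab => hA (hmem.1 ha) (hmem.1 hb) (Subtype.coe_ne_coe.2 hab))
    (fun v hv a ha b hb hva hvb =>
      Subtype.ext (hnbr v (hmem.not.1 hv) a (hmem.1 ha) b (hmem.1 hb) hva hvb))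
    (fun u w z hu hw hz huz => htrans u w z (hmem.not.1 hu) (hmem.not.1 hw) (hmem.not.1 hz)
      (Subtype.coe_ne_coe.2 huz))

end SimpleGraph

theorem stmt15 {V : Type*} [Fintype V] (G : SimpleGraph V) (h1 : _root_.Free G P3UP2)
    (h2 : _root_.Free G diamondG) (hω : 5 ≤ G.cliqueNum) :
    IsPerfect G ∧ G.chromaticNumber = (G.cliqueNum : ℕ∞) := by
  obtain ⟨K, hK⟩ := G.maximumClique_exists
  have hnbr (v) (hv : v ∉ K) (a) (ha : a ∈ K) (b) (hb : b ∈ K) :=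
    h2.eq_of_adj_of_adj_of_maximal_isClique (hK.isMaximalClique K) hv ha hb
  have htrans (u w z) (hu : u ∉ K) (hw : w ∉ K) (hz : z ∉ K) :=
    h1.adj_of_adj_of_adj_of_isClique hK.isClique (G.maximumClique_card_eq_cliqueNum K hK ▸ hω)
      hnbr hu hw hz
  exact ⟨isPerfect_of_isClique hK.isClique hnbr htrans,
    chromaticNumber_eq_cliqueNum_of_isClique hK.isClique hnbr htrans⟩
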